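/- arXiv:2009.12574 — 5 statements merged into one kernel-verified Lean document; each statement's English description precedes it below -/
import Mathlib

section
/- Every entropy-like (EL) function f : O^n → ℝ is concave along any positive direction: if 0 ≤ x ≤ y (coordinatewise) and 0 ≤ λ ≤ 1, then λ·f(x) + (1−λ)·f(y) ≤ f(λ·x + (1−λ)·y). -/
open Filter Topology Set

/-- Entropy-like (EL) function on the non-negative orthant of ℝ^n:
pointed, submodular (coordinatewise lattice), non-decreasing,
and satisfying the Diminishing Returns property along each coordinate. -/
def IsEL (n : ℕ) (f : (Fin n → ℝ) → ℝ) : Prop :=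
  f 0 = 0 ∧
  (∀ x y : Fin n → ℝ, 0 ≤ x → 0 ≤ y → f (x ⊓ y) + f (x ⊔ y) ≤ f x + f y) ∧
  (∀ x y : Fin n → ℝ, 0 ≤ x → x ≤ y → f x ≤ f y) ∧
  (∀ (x : Fin n → ℝ) (i : Fin n) (lam eps : ℝ), 0 ≤ x → 0 < lam → 0 < eps →
    f ((x + lam • (Pi.single i 1 : Fin n → ℝ)) + eps • (Pi.single i 1 : Fin n → ℝ)) - f (x + lam • (Pi.single i 1 : Fin n → ℝ)) ≤
      f (x + eps • (Pi.single i 1 : Fin n → ℝ)) - f x)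

/-- The right partial derivative of `f` in coordinate `i` at `x` is `d`. -/
def HasRightPD (n : ℕ) (f : (Fin n → ℝ) → ℝ) (i : Fin n) (x : Fin n → ℝ) (d : ℝ) : Prop :=
  Filter.Tendsto (fun ε : ℝ => (f (x + ε • (Pi.single i 1 : Fin n → ℝ)) - f x) / ε) (𝓝[>] 0) (𝓝 d)

/-- The left partial derivative of `f` in coordinate `i` at `x` is `d`. -/
def HasLeftPD (n : ℕ) (f : (Fin n → ℝ) → ℝ) (i : Fin n) (x : Fin n → ℝ) (d : ℝ) : Prop :=
  Filter.Tendsto (fun ε : ℝ => (f x - f (x - ε • (Pi.single i 1 : Fin n → ℝ))) / ε) (𝓝[>] 0) (𝓝 d)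


/-
Along the segment from `x` to `y`, `G t = f (x + t • (y - x))` is monotone and has antitone
increments: `G (t + δ) - G t ≤ G (s + δ) - G s` for `0 ≤ s ≤ t`. This is diminishing returns for
the nonnegative step `δ • (y - x)`, taken one coordinate at a time: the DR axiom lifts the lower
base point to the upper one in the moving coordinate, and submodularity handles the others.
Averaging the increments (Chebyshev's sum inequality) gives `G (p / q) - G 0 ≥ p / q * (G 1 - G 0)`,
and monotonicity of `G` passes from the rationals `⌊μ q⌋ / q` to every `μ ∈ [0, 1]`.
-/

namespace IsEL

variable {n : ℕ} {f : (Fin n → ℝ) → ℝ}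

theorem map_add_single_sub_le (hf : IsEL n f) {z z' : Fin n → ℝ} (hz : 0 ≤ z) (hzz' : z ≤ z')
    (i : Fin n) {ε : ℝ} (hε : 0 < ε) :
    f (z' + ε • Pi.single i 1) - f z' ≤ f (z + ε • Pi.single i 1) - f z := by
  obtain ⟨-, hsub, -, hDR⟩ := hf
  set e : Fin n → ℝ := Pi.single i 1
  have he : ∀ j, e j = if j = i then 1 else 0 := fun j => Pi.single_apply i 1 j
  set w := z + (z' i - z i) • e
  have hw : 0 ≤ w := add_nonneg hz (smul_nonneg (sub_nonneg.2 (hzz' i)) (by simp [e]))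
  have hDRw : f (w + ε • e) - f w ≤ f (z + ε • e) - f z := by
    rcases (sub_nonneg.2 (hzz' i)).eq_or_lt with hc | hc
    · simp [w, ← hc]
    · exact hDR z i _ ε hz hc hε
  have hinf : (w + ε • e) ⊓ z' = w := by
    funext j
    by_cases hj : j = i
    · subst hj; simp [w, he]; linarith
    · simp [w, he, hj, hzz' j]
  have hsup : (w + ε • e) ⊔ z' = z' + ε • e := by
    funext j
    by_cases hj : j = i
    · subst hj; simp [w, he]; linarith
    · simp [w, he, hj, hzz' j]
  have := hsub (w + ε • e) z' (add_nonneg hw (smul_nonneg hε.le (by simp [e]))) (hz.trans hzz')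
  rw [hinf, hsup] at this
  linarith

theorem map_add_sub_le (hf : IsEL n f) {z z' v : Fin n → ℝ} (hz : 0 ≤ z) (hzz' : z ≤ z')
    (hv : 0 ≤ v) : f (z' + v) - f z' ≤ f (z + v) - f z := by
  classical
  suffices ∀ s : Finset (Fin n), f (z' + ∑ i ∈ s, v i • Pi.single i 1) - f z' ≤
      f (z + ∑ i ∈ s, v i • Pi.single i 1) - f z by
    simpa only [← pi_eq_sum_univ'] using this Finset.univ
  intro s
  induction s using Finset.induction_on with
  | empty => simp
  | insert i s his ih =>
    set u := ∑ j ∈ s, v j • (Pi.single j 1 : Fin n → ℝ)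
    have hu : 0 ≤ u := Finset.sum_nonneg fun j _ => smul_nonneg (hv j) (by simp)
    rw [Finset.sum_insert his, add_comm (v i • _), ← add_assoc, ← add_assoc]
    rcases (hv i).eq_or_lt with hvi | hvi
    · simpa [← hvi] using ih
    · linarith [hf.map_add_single_sub_le (add_nonneg hz hu) (add_le_add_left hzz' u) i hvi]

end IsEL

theorem Antitone.natCast_mul_sum_range_le {α : Type*} [Semiring α] [LinearOrder α]
    [IsStrictOrderedRing α] [ExistsAddOfLE α] {Δ : ℕ → α} (hΔ : Antitone Δ) {p q : ℕ}
    (hpq : p ≤ q) : (p : α) * ∑ k ∈ Finset.range q, Δ k ≤ q * ∑ k ∈ Finset.range p, Δ k := by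
  have hind : Antitone fun k : ℕ => if k < p then (1 : α) else 0 := by
    intro k l hkl
    by_cases hl : l < p
    · simp [hl, hkl.trans_lt hl]
    · simp only [hl, if_false]
      split_ifs <;> simp
  have := ((hΔ.monovary hind).monovaryOn (Finset.range q : Set ℕ)).sum_mul_sum_le_card_mul_sum
  have hrange : (Finset.range q).filter (· < p) = Finset.range p := by
    ext k; simp only [Finset.mem_filter, Finset.mem_range]; omega
  rw [(Nat.cast_commute p _).eq]
  simpa [Finset.sum_ite, hrange] using this

theorem natCast_div_mul_sub_le_sub {G : ℝ → ℝ}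
    (hG : ∀ s t δ, 0 ≤ s → s ≤ t → 0 ≤ δ → G (t + δ) - G t ≤ G (s + δ) - G s)
    {p q : ℕ} (hq : 0 < q) (hpq : p ≤ q) : (p / q : ℝ) * (G 1 - G 0) ≤ G (p / q) - G 0 := by
  have hq' : (0 : ℝ) < q := Nat.cast_pos.2 hq
  set Δ : ℕ → ℝ := fun k => G ((k + 1 : ℕ) / q) - G (k / q)
  have hΔ : Antitone Δ := by
    intro k l hkl
    have := hG (k / q) (l / q) (1 / q) (by positivity) (by gcongr) (by positivity)
    simpa only [Δ, ← add_div, Nat.cast_succ] using this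
  have htelescope (m : ℕ) : ∑ k ∈ Finset.range m, Δ k = G (m / q) - G 0 :=
    (Finset.sum_range_sub (fun k : ℕ => G (k / q)) m).trans (by simp)
  have := hΔ.natCast_mul_sum_range_le hpq
  rw [htelescope, htelescope, div_self hq'.ne'] at this
  rw [div_mul_eq_mul_div, div_le_iff₀ hq']
  linarith

theorem mul_sub_le_sub_of_monotoneOn {G : ℝ → ℝ} (hmono : MonotoneOn G (Ici 0))
    (hG : ∀ s t δ, 0 ≤ s → s ≤ t → 0 ≤ δ → G (t + δ) - G t ≤ G (s + δ) - G s)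
    {μ : ℝ} (hμ0 : 0 ≤ μ) (hμ1 : μ ≤ 1) : μ * (G 1 - G 0) ≤ G μ - G 0 := by
  have hD : 0 ≤ G 1 - G 0 :=
    sub_nonneg.2 (hmono (mem_Ici.2 le_rfl) (mem_Ici.2 zero_le_one) zero_le_one)
  have happrox : ∀ q : ℕ, 0 < q → μ * (G 1 - G 0) ≤ G μ - G 0 + (G 1 - G 0) / q := by
    intro q hq
    have hq' : (0 : ℝ) < q := Nat.cast_pos.2 hq
    set p := ⌊μ * q⌋₊
    have hpq : p ≤ q := Nat.floor_le_of_le (by nlinarith)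
    have hp_le : (p / q : ℝ) ≤ μ := by
      rw [div_le_iff₀ hq']; exact Nat.floor_le (by positivity)
    have hp_gt : μ - p / q < 1 / q := by
      have := Nat.sub_one_lt_floor (μ * q)
      rw [sub_lt_iff_lt_add, ← add_div, lt_div_iff₀ hq']
      linarith
    have hgap : (μ - p / q) * (G 1 - G 0) ≤ (G 1 - G 0) / q := by
      calc _ ≤ 1 / q * (G 1 - G 0) := mul_le_mul_of_nonneg_right hp_gt.le hD
        _ = _ := by ring
    have hGp : G (p / q) ≤ G μ := hmono (mem_Ici.2 (by positivity)) hμ0 hp_le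
    linarith [natCast_div_mul_sub_le_sub hG hq hpq]
  have hlim : Tendsto (fun q : ℕ => G μ - G 0 + (G 1 - G 0) / q) atTop (𝓝 (G μ - G 0)) := by
    simpa using (tendsto_const_div_atTop_nhds_zero_nat (G 1 - G 0)).const_add (G μ - G 0)
  exact ge_of_tendsto hlim (eventually_gt_atTop 0 |>.mono happrox)

/-- every EL function is concave along any positive direction. -/
theorem stmt_1 {n : ℕ} (f : (Fin n → ℝ) → ℝ) (hf : IsEL n f)
    (x y : Fin n → ℝ) (hx : 0 ≤ x) (hxy : x ≤ y)
    (lam : ℝ) (h0 : 0 ≤ lam) (h1 : lam ≤ 1) :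
    lam * f x + (1 - lam) * f y ≤ f (lam • x + (1 - lam) • y) := by
  have hv : 0 ≤ y - x := sub_nonneg.2 hxy
  have hpath : ∀ {t : ℝ}, 0 ≤ t → 0 ≤ x + t • (y - x) := fun ht =>
    add_nonneg hx (smul_nonneg ht hv)
  have hpath_mono : ∀ {s t : ℝ}, s ≤ t → x + s • (y - x) ≤ x + t • (y - x) := fun hst =>
    add_le_add_right (smul_le_smul_of_nonneg_right hst hv) x
  set G : ℝ → ℝ := fun t => f (x + t • (y - x))
  have hmono : MonotoneOn G (Ici 0) := by
    intro s hs t _ hst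
    exact hf.2.2.1 _ _ (hpath hs) (hpath_mono hst)
  have hG : ∀ s t δ, 0 ≤ s → s ≤ t → 0 ≤ δ → G (t + δ) - G t ≤ G (s + δ) - G s := by
    intro s t δ hs hst hδ
    simpa only [G, add_smul, ← add_assoc] using
      hf.map_add_sub_le (hpath hs) (hpath_mono hst) (smul_nonneg hδ hv)
  have := mul_sub_le_sub_of_monotoneOn hmono hG (μ := 1 - lam) (by linarith) (by linarith)
  have hcomb : lam • x + (1 - lam) • y = x + (1 - lam) • (y - x) := by module
  simp only [G, zero_smul, add_zero, one_smul, add_sub_cancel] at this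
  rw [hcomb]
  linarith
end

section
/- For any EL function f : O^n → ℝ, the Diminishing Returns inequality holds for arbitrary pairs of points: if 0 ≤ x ≤ y (coordinatewise) and ε > 0, then for every coordinate i, f(x + ε·e_i) − f(x) ≥ f(y + ε·e_i) − f(y). -/
open Filter Topology Set

/-!
Put `z := update y i (x i)`, the point that agrees with `x` in coordinate `i` and with `y`
elsewhere. Submodularity applied to `x + ε eᵢ` and `z`, whose meet is `x` and whose join is
`z + ε eᵢ`, compares the increments at `z` and at `x`; since `y = z + (yᵢ - xᵢ) eᵢ`, the
coordinatewise Diminishing Returns property compares the increments at `y` and at `z`.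
-/

namespace Pi

variable {ι α : Type*} [DecidableEq ι]

theorem smul_single_one [Semiring α] (i : ι) (a : α) : a • (single i 1 : ι → α) = single i a := by
  rw [← single_smul', smul_eq_mul, mul_one]

theorem update_add_single_sub [AddCommGroup α] (y : ι → α) (i : ι) (c : α) :
    Function.update y i c + single i (y i - c) = y := by
  ext j
  rcases eq_or_ne j i with rfl | hj <;> simp [*]

section LinearOrder

variable [LinearOrder α] {x y : ι → α}

theorem le_update_of_le (hxy : x ≤ y) (i : ι) : x ≤ Function.update y i (x i) :=
  le_update_iff.2 ⟨le_rfl, fun j _ => hxy j⟩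

variable [AddCommMonoid α] [IsOrderedAddMonoid α]

theorem add_single_inf_update (hxy : x ≤ y) {a : α} (ha : 0 ≤ a) (i : ι) :
    (x + single i a) ⊓ Function.update y i (x i) = x := by
  ext j
  rcases eq_or_ne j i with rfl | hj
  · simpa using le_add_of_nonneg_right ha
  · simpa [hj] using hxy j

theorem add_single_sup_update (hxy : x ≤ y) {a : α} (ha : 0 ≤ a) (i : ι) :
    (x + single i a) ⊔ Function.update y i (x i) = Function.update y i (x i) + single i a := by
  ext j
  rcases eq_or_ne j i with rfl | hj
  · simpa using le_add_of_nonneg_right ha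
  · simpa [hj] using hxy j

end LinearOrder

end Pi

namespace IsEL

variable {n : ℕ} {f : (Fin n → ℝ) → ℝ}

theorem add_single_sub_le (hf : IsEL n f) {z : Fin n → ℝ} (hz : 0 ≤ z) (i : Fin n)
    {lam eps : ℝ} (hlam : 0 ≤ lam) (heps : 0 < eps) :
    f (z + Pi.single i lam + Pi.single i eps) - f (z + Pi.single i lam) ≤
      f (z + Pi.single i eps) - f z := by
  rcases hlam.eq_or_lt with rfl | hlam
  · simp
  · simpa only [Pi.smul_single_one] using hf.2.2.2 z i lam eps hz hlam heps

theorem update_add_single_sub_le (hf : IsEL n f) {x y : Fin n → ℝ} (hx : 0 ≤ x) (hxy : x ≤ y)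
    (i : Fin n) {eps : ℝ} (heps : 0 ≤ eps) :
    f (Function.update y i (x i) + Pi.single i eps) - f (Function.update y i (x i)) ≤
      f (x + Pi.single i eps) - f x := by
  have hsub := hf.2.1 (x + Pi.single i eps) (Function.update y i (x i))
    (add_nonneg hx (Pi.single_nonneg.2 heps)) (hx.trans (Pi.le_update_of_le hxy i))
  rw [Pi.add_single_inf_update hxy heps, Pi.add_single_sup_update hxy heps] at hsub
  linarith

end IsEL

/-- the Diminishing Returns inequality holds for arbitrary pairs
of comparable points. -/
theorem stmt_2 {n : ℕ} (f : (Fin n → ℝ) → ℝ) (hf : IsEL n f)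
    (x y : Fin n → ℝ) (hx : 0 ≤ x) (hxy : x ≤ y) (i : Fin n)
    (eps : ℝ) (heps : 0 < eps) :
    f (y + eps • (Pi.single i 1 : Fin n → ℝ)) - f y ≤
      f (x + eps • (Pi.single i 1 : Fin n → ℝ)) - f x := by
  set z := Function.update y i (x i)
  have hz : 0 ≤ z := hx.trans (Pi.le_update_of_le hxy i)
  rw [Pi.smul_single_one]
  calc f (y + Pi.single i eps) - f y
      = f (z + Pi.single i (y i - x i) + Pi.single i eps) - f (z + Pi.single i (y i - x i)) := by
        rw [Pi.update_add_single_sub]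
    _ ≤ f (z + Pi.single i eps) - f z := hf.add_single_sub_le hz i (sub_nonneg.2 (hxy i)) heps
    _ ≤ f (x + Pi.single i eps) - f x := hf.update_add_single_sub_le hx hxy i heps.le
end

section
/- Let S be the intersection of the hyperplane {x : c₁x₁ + ⋯ + c_nx_n = M} with the non-negative orthant, where all cᵢ > 0 and M > 0. Then the function f(y) = k·min(Σᵢ cᵢyᵢ, M) with k = 1/min_i cᵢ is an EL function that is S-feasible, and its cost equals (max_i cᵢ)/(min_i cᵢ). -/
/-!
On the orthant `f y = k · min (c ⬝ᵥ y, M)` is a concave, non-decreasing function of the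
non-negative linear form `c ⬝ᵥ y`. Such a composition is pointed, monotone and has diminishing
returns, and it is submodular because `c ⬝ᵥ (x ⊓ y) + c ⬝ᵥ (x ⊔ y) = c ⬝ᵥ x + c ⬝ᵥ y`.
On the hyperplane `c ⬝ᵥ x = M` the function is flat to the right in every coordinate and has
slope `k cᵢ` to the left, so the jump `k cᵢ ≥ cᵢ / minⱼ cⱼ ≥ 1`. Below the hyperplane, in
particular at `0`, the right slope is `k cᵢ`, whose maximum is `maxᵢ cᵢ / minᵢ cᵢ`.
-/

open Filter Topology Set

section PartialDerivatives

variable {n : ℕ} {f : (Fin n → ℝ) → ℝ} {i : Fin n} {x : Fin n → ℝ} {d d' : ℝ}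

lemma HasRightPD.unique (h : HasRightPD n f i x d) (h' : HasRightPD n f i x d') : d = d' :=
  tendsto_nhds_unique h h'

lemma HasLeftPD.unique (h : HasLeftPD n f i x d) (h' : HasLeftPD n f i x d') : d = d' :=
  tendsto_nhds_unique h h'

end PartialDerivatives

lemma min_add_min_le_min_add_min {a b s t M : ℝ} (has : a ≤ s) (hsb : s ≤ b)
    (h : a + b = s + t) : min a M + min b M ≤ min s M + min t M := by
  simp only [min_def]; split_ifs <;> linarith

lemma min_add_sub_min_le_of_le {u v d M : ℝ} (hvu : v ≤ u) (hd : 0 ≤ d) :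
    min (u + d) M - min u M ≤ min (v + d) M - min v M := by
  simp only [min_def]; split_ifs <;> linarith

section TruncatedLinear

variable {n : ℕ} {c : Fin n → ℝ} {M k : ℝ}

lemma dotProduct_add_smul_single (c x : Fin n → ℝ) (i : Fin n) (t : ℝ) :
    c ⬝ᵥ (x + t • Pi.single i 1) = c ⬝ᵥ x + t * c i := by
  rw [dotProduct_add, dotProduct_smul, dotProduct_single, smul_eq_mul, mul_one]

lemma dotProduct_sub_smul_single (c x : Fin n → ℝ) (i : Fin n) (t : ℝ) :
    c ⬝ᵥ (x - t • Pi.single i 1) = c ⬝ᵥ x - t * c i := by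
  rw [sub_eq_add_neg, ← neg_smul, dotProduct_add_smul_single]; ring

lemma dotProduct_inf_add_dotProduct_sup (c x y : Fin n → ℝ) :
    c ⬝ᵥ (x ⊓ y) + c ⬝ᵥ (x ⊔ y) = c ⬝ᵥ x + c ⬝ᵥ y := by
  rw [← dotProduct_add, ← dotProduct_add, inf_add_sup]

theorem isEL_mul_min_dotProduct (hc : 0 ≤ c) (hM : 0 ≤ M) (hk : 0 ≤ k) :
    IsEL n (fun y => k * min (c ⬝ᵥ y) M) := by
  refine ⟨by simp [min_eq_left hM], fun x y _ _ => ?_, fun x y _ hxy => ?_,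
    fun x i lam eps _ hlam heps => ?_⟩
  · have key := min_add_min_le_min_add_min (M := M)
      (dotProduct_le_dotProduct_of_nonneg_left inf_le_left hc)
      (dotProduct_le_dotProduct_of_nonneg_left le_sup_left hc)
      (dotProduct_inf_add_dotProduct_sup c x y)
    linarith [mul_le_mul_of_nonneg_left key hk]
  · exact mul_le_mul_of_nonneg_left
      (min_le_min_right M (dotProduct_le_dotProduct_of_nonneg_left hxy hc)) hk
  · simp only [dotProduct_add_smul_single]
    have key := min_add_sub_min_le_of_le (M := M)
      (le_add_of_nonneg_right (mul_nonneg hlam.le (hc i)) : c ⬝ᵥ x ≤ c ⬝ᵥ x + lam * c i)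
      (mul_nonneg heps.le (hc i))
    linarith [mul_le_mul_of_nonneg_left key hk]

lemma hasRightPD_mul_min_dotProduct_of_lt {x : Fin n → ℝ} (hx : c ⬝ᵥ x < M) (i : Fin n) :
    HasRightPD n (fun y => k * min (c ⬝ᵥ y) M) i x (k * c i) := by
  have hsmall : ∀ᶠ ε in 𝓝[>] (0 : ℝ), ε * c i < M - c ⬝ᵥ x :=
    ((continuous_mul_const (c i)).tendsto' 0 0 (zero_mul _)).mono_left nhdsWithin_le_nhds
      |>.eventually (gt_mem_nhds (sub_pos.2 hx))
  refine tendsto_const_nhds.congr' ?_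
  filter_upwards [hsmall, self_mem_nhdsWithin] with ε hε (hε0 : 0 < ε)
  rw [dotProduct_add_smul_single, min_eq_left (by linarith), min_eq_left hx.le]
  field_simp
  ring

lemma hasRightPD_mul_min_dotProduct_of_eq {x : Fin n → ℝ} (hx : c ⬝ᵥ x = M) {i : Fin n}
    (hci : 0 ≤ c i) : HasRightPD n (fun y => k * min (c ⬝ᵥ y) M) i x 0 := by
  refine tendsto_const_nhds.congr' ?_
  filter_upwards [self_mem_nhdsWithin] with ε (hε : 0 < ε)
  rw [dotProduct_add_smul_single, hx, min_eq_right (by nlinarith), min_self, sub_self,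
    zero_div]

lemma hasLeftPD_mul_min_dotProduct_of_eq {x : Fin n → ℝ} (hx : c ⬝ᵥ x = M) {i : Fin n}
    (hci : 0 ≤ c i) : HasLeftPD n (fun y => k * min (c ⬝ᵥ y) M) i x (k * c i) := by
  refine tendsto_const_nhds.congr' ?_
  filter_upwards [self_mem_nhdsWithin] with ε (hε : 0 < ε)
  rw [dotProduct_sub_smul_single, hx, min_self, min_eq_left (by nlinarith)]
  field_simp
  ring

end TruncatedLinear

/-- for a linear s-surface `∑ cᵢxᵢ = M`, the function
`f(y) = k·min(∑ cᵢyᵢ, M)` with `k = 1/minᵢ cᵢ` is an S-feasible EL function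
whose cost equals `(maxᵢ cᵢ)/(minᵢ cᵢ)`. -/
theorem stmt_14 {n : ℕ} [NeZero n] (c : Fin n → ℝ) (hc : ∀ i, 0 < c i)
    (M : ℝ) (hM : 0 < M)
    (S : Set (Fin n → ℝ)) (hS : S = {x : Fin n → ℝ | 0 ≤ x ∧ ∑ i, c i * x i = M})
    (k : ℝ) (hk : k = (Finset.univ.inf' Finset.univ_nonempty c)⁻¹)
    (f : (Fin n → ℝ) → ℝ) (hfdef : f = fun y => k * min (∑ i, c i * y i) M) :
    IsEL n f ∧
    (∀ x ∈ S, (∀ i, 0 < x i) → ∀ (i : Fin n) (dm dp : ℝ),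
      HasLeftPD n f i x dm → HasRightPD n f i x dp → 1 ≤ dm - dp) ∧
    (∀ i, HasRightPD n f i 0 (k * c i)) ∧
    (Finset.univ.sup' Finset.univ_nonempty (fun i => k * c i) =
      Finset.univ.sup' Finset.univ_nonempty c / Finset.univ.inf' Finset.univ_nonempty c) := by
  change f = fun y => k * min (c ⬝ᵥ y) M at hfdef
  subst hfdef hS
  have hmin : 0 < Finset.univ.inf' Finset.univ_nonempty c :=
    (Finset.lt_inf'_iff _).2 fun i _ => hc i
  have hk0 : 0 ≤ k := hk ▸ (inv_pos.2 hmin).le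
  refine ⟨isEL_mul_min_dotProduct (fun i => (hc i).le) hM.le hk0, ?_, fun i => ?_, ?_⟩
  · rintro x ⟨-, hxM⟩ - i dm dp hdm hdp
    rw [← hasLeftPD_mul_min_dotProduct_of_eq hxM (hc i).le |>.unique hdm,
      ← hasRightPD_mul_min_dotProduct_of_eq hxM (hc i).le |>.unique hdp, sub_zero, hk,
      one_le_inv_mul₀ hmin]
    exact Finset.inf'_le _ (Finset.mem_univ i)
  · exact hasRightPD_mul_min_dotProduct_of_lt (by rwa [dotProduct_zero]) i
  · rw [← Finset.mul₀_sup' hk0, hk, inv_mul_eq_div]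
end

section
/- Let S ⊂ O² be the graph of a strictly decreasing, strictly convex, continuously differentiable function α on [0, a] with α(0) = b > 0, α(a) = 0, α'(0) ≤ −1 ≤ α'(a) < 0, and let β = α^{-1}. Let T = (t_x, t_y) be the point of S where α'(t_x) = −1, and C = a − t_x + b − t_y. Define f(x,y) = C if x ≥ t_x and y ≥ t_y; f(x,y) = C + min(x − β(y), 0) if x ≥ t_x and y < t_y; f(x,y) = C + min(y − α(x), 0) if x < t_x and y ≥ t_y; and f(x,y) = a − α(x) + b − β(y) otherwise. Then f is an EL function, f is S-feasible, and cost(f) = max(−α'(0), −β'(0)). -/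
open Filter Topology Set

open scoped Classical

/-- S-feasibility of an EL function for a surface `S`. -/
def SFeasible (n : ℕ) (f : (Fin n → ℝ) → ℝ) (S : Set (Fin n → ℝ)) : Prop :=
  ∀ x ∈ S, (∀ i, 0 < x i) → ∀ (i : Fin n) (dm dp : ℝ),
    HasLeftPD n f i x dm → HasRightPD n f i x dp → 1 ≤ dm - dp

/-!
On the quadrant `f (x, y) = C + deficit α tx ty x y + deficit β ty tx y x`, with both deficits
nonpositive. The inverse `β` satisfies the same hypotheses as `α` with the coordinates exchanged, so
each statement about the first coordinate transfers to the second.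

Each deficit is submodular because `x ↦ α (min x tx)` is non-increasing, and along horizontal lines
the sum of the two deficits is concave and non-decreasing because `α` is convex with slope at most
`-1` on `[0, tx]`; concavity gives diminishing returns. Both deficits vanish on `S`, so `f` attains
its maximum `C` there, and moving left from a point of `S` it drops at rate at least `1`; hence the
left partial derivative is at least `1` and the right one at most `0`. Near the origin
`f (ε, 0) = α 0 - α ε`.
-/

lemma ConcaveOn.map_add_add_sub_le {G : ℝ → ℝ} {s : Set ℝ} (hG : ConcaveOn ℝ s G) {x d e : ℝ}
    (hx : x ∈ s) (hxde : x + d + e ∈ s) (hd : 0 < d) (he : 0 < e) :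
    G (x + d + e) - G (x + d) ≤ G (x + e) - G x := by
  have hde : 0 < d + e := by positivity
  -- `x + q` is the convex combination of `x` and `x + d + e` with weights `p, q` over `d + e`
  have key : ∀ p q : ℝ, 0 < p → 0 < q → p + q = d + e →
      p * G x + q * G (x + d + e) ≤ (d + e) * G (x + q) := by
    intro p q hp hq hpq
    have h := hG.2 hx hxde (div_pos hp hde).le (div_pos hq hde).le
      (by rw [← add_div, hpq, div_self hde.ne'])
    have hpt : (p / (d + e)) • x + (q / (d + e)) • (x + d + e) = x + q := by
      simp only [smul_eq_mul]
      field_simp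
      linear_combination x * hpq
    rw [hpt, smul_eq_mul, smul_eq_mul, div_mul_eq_mul_div, div_mul_eq_mul_div, ← add_div,
      div_le_iff₀ hde] at h
    linarith
  have hsum : (d + e) * (G x + G (x + d + e)) ≤ (d + e) * (G (x + e) + G (x + d)) := by
    linarith [key d e hd he rfl, key e d he hd (add_comm e d)]
  linarith [le_of_mul_le_mul_left hsum hde]

lemma antitoneOn_comp_min {g : ℝ → ℝ} {t : ℝ} (ht : 0 ≤ t) (hg : AntitoneOn g (Icc 0 t)) :
    AntitoneOn (fun x => g (min x t)) (Ici 0) := fun _ hu _ hv huv =>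
  hg ⟨le_min hu ht, min_le_right _ _⟩ ⟨le_min hv ht, min_le_right _ _⟩ (min_le_min_right t huv)

lemma convexOn_comp_min {g : ℝ → ℝ} {t : ℝ} (ht : 0 ≤ t) (hg : ConvexOn ℝ (Icc 0 t) g)
    (hg' : AntitoneOn g (Icc 0 t)) : ConvexOn ℝ (Ici 0) (fun x => g (min x t)) := by
  have himage : (fun x => min x t) '' Ici 0 = Icc 0 t := by
    ext u
    refine ⟨?_, fun hu => ⟨u, hu.1, min_eq_left hu.2⟩⟩
    rintro ⟨x, hx, rfl⟩
    exact ⟨le_min hx ht, min_le_right _ _⟩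
  have hmin : ConcaveOn ℝ (Ici 0) (fun x : ℝ => min x t) :=
    (concaveOn_id (convex_Ici 0)).inf (concaveOn_const t (convex_Ici 0))
  rw [← himage] at hg hg'
  exact hg.comp_concaveOn hmin hg'

lemma ConvexOn.antitoneOn_add_id_of_hasDerivAt {f : ℝ → ℝ} {s : Set ℝ} {t : ℝ}
    (hf : ConvexOn ℝ s f) (ht : t ∈ s) (hd : HasDerivAt f (-1) t) :
    AntitoneOn (fun x => f x + x) (s ∩ Iic t) := by
  rintro u ⟨hu, hut⟩ v ⟨hv, hvt⟩ huv
  rcases huv.eq_or_lt with rfl | huv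
  · rfl
  have hslope : (f v - f u) / (v - u) ≤ -1 :=
    calc (f v - f u) / (v - u) ≤ (f t - f u) / (t - u) :=
          hf.secant_mono hu hv ht huv.ne' (huv.trans_le hvt).ne' hvt
      _ = slope f u t := by rw [slope_def_field]
      _ ≤ -1 := hf.slope_le_of_hasDerivAt hu ht (huv.trans_le hvt) hd
  have := (div_le_iff₀ (sub_pos.2 huv)).1 hslope
  dsimp only
  linarith

lemma ConvexOn.convexOn_of_invOn {f g : ℝ → ℝ} {s t : Set ℝ} (hf : ConvexOn ℝ s f)
    (ht : Convex ℝ t) (hg : AntitoneOn g t) (hfs : MapsTo f s t) (hgt : MapsTo g t s)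
    (hinv : InvOn g f s t) : ConvexOn ℝ t g := by
  refine ⟨ht, fun y₁ hy₁ y₂ hy₂ p q hp hq hpq => ?_⟩
  have hz := hf.1 (hgt hy₁) (hgt hy₂) hp hq hpq
  have hfz := hf.2 (hgt hy₁) (hgt hy₂) hp hq hpq
  rw [hinv.2 hy₁, hinv.2 hy₂] at hfz
  calc g (p • y₁ + q • y₂) ≤ g (f (p • g y₁ + q • g y₂)) :=
        hg (hfs hz) (ht hy₁ hy₂ hp hq hpq) hfz
    _ = p • g y₁ + q • g y₂ := hinv.1 hz

lemma StrictAntiOn.strictAntiOn_of_invOn {f g : ℝ → ℝ} {s t : Set ℝ} (hf : StrictAntiOn f s)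
    (hgt : MapsTo g t s) (hinv : InvOn g f s t) : StrictAntiOn g t := by
  intro y₁ hy₁ y₂ hy₂ hy
  by_contra! h
  have := hf.antitoneOn (hgt hy₁) (hgt hy₂) h
  rw [hinv.2 hy₁, hinv.2 hy₂] at this
  linarith

lemma one_le_sub_of_eventually_le {G : ℝ → ℝ} {x₀ dm dp : ℝ}
    (hm : Tendsto (fun ε => (G x₀ - G (x₀ - ε)) / ε) (𝓝[>] 0) (𝓝 dm))
    (hp : Tendsto (fun ε => (G (x₀ + ε) - G x₀) / ε) (𝓝[>] 0) (𝓝 dp))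
    (hleft : ∀ᶠ ε in 𝓝[>] 0, G (x₀ - ε) ≤ G x₀ - ε)
    (hright : ∀ᶠ ε in 𝓝[>] 0, G (x₀ + ε) ≤ G x₀) : 1 ≤ dm - dp := by
  have hdm : 1 ≤ dm := ge_of_tendsto hm <| by
    filter_upwards [hleft, self_mem_nhdsWithin] with ε h (hε : 0 < ε)
    rw [le_div_iff₀ hε]
    linarith
  have hdp : dp ≤ 0 := le_of_tendsto hp <| by
    filter_upwards [hright, self_mem_nhdsWithin] with ε h (hε : 0 < ε)
    exact div_nonpos_of_nonpos_of_nonneg (by linarith) hε.le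
  linarith

theorem isEL_two_of_sections {F : ℝ → ℝ → ℝ} (h0 : F 0 0 = 0)
    (hsub : ∀ ⦃x₁ x₂ y₁ y₂ : ℝ⦄, 0 ≤ x₁ → x₁ ≤ x₂ → 0 ≤ y₁ → y₁ ≤ y₂ →
      F x₁ y₁ + F x₂ y₂ ≤ F x₁ y₂ + F x₂ y₁)
    (hx : ∀ y, 0 ≤ y → ConcaveOn ℝ (Ici 0) (fun x => F x y) ∧ MonotoneOn (fun x => F x y) (Ici 0))
    (hy : ∀ x, 0 ≤ x → ConcaveOn ℝ (Ici 0) (F x) ∧ MonotoneOn (F x) (Ici 0)) :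
    IsEL 2 (fun p => F (p 0) (p 1)) := by
  refine ⟨h0, fun p q hp hq => ?_, fun p q hp hpq => ?_, fun p i l e hp hl he => ?_⟩
  · simp only [Pi.inf_apply, Pi.sup_apply]
    rcases le_total (p 0) (q 0) with h₀ | h₀ <;> rcases le_total (p 1) (q 1) with h₁ | h₁ <;>
      simp only [inf_of_le_left, inf_of_le_right, sup_of_le_left, sup_of_le_right, h₀, h₁]
    · exact le_rfl
    · exact hsub (hp 0) h₀ (hq 1) h₁
    · linarith [hsub (hq 0) h₀ (hp 1) h₁]
    · linarith
  · calc F (p 0) (p 1) ≤ F (q 0) (p 1) := (hx _ (hp 1)).2 (hp 0) ((hp 0).trans (hpq 0)) (hpq 0)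
      _ ≤ F (q 0) (q 1) := (hy _ ((hp 0).trans (hpq 0))).2 (hp 1) ((hp 1).trans (hpq 1)) (hpq 1)
  · fin_cases i
    · simpa using (hx _ (hp 1)).1.map_add_add_sub_le (hp 0)
        (add_nonneg (add_nonneg (hp 0) hl.le) he.le) hl he
    · simpa using (hy _ (hp 0)).1.map_add_add_sub_le (hp 1)
        (add_nonneg (add_nonneg (hp 1) hl.le) he.le) hl he

structure IsPlateauBranch (α α' : ℝ → ℝ) (a b tx ty : ℝ) : Prop where
  pos : 0 < a
  hasDerivAt : ∀ x ∈ Icc 0 a, HasDerivAt α (α' x) x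
  convexOn : ConvexOn ℝ (Icc 0 a) α
  strictAntiOn : StrictAntiOn α (Icc 0 a)
  apply_zero : α 0 = b
  apply_right : α a = 0
  tx_mem : tx ∈ Icc 0 a
  deriv_tx : α' tx = -1
  apply_tx : α tx = ty

namespace IsPlateauBranch

variable {α α' β β' : ℝ → ℝ} {a b tx ty : ℝ}

lemma antitoneOn (h : IsPlateauBranch α α' a b tx ty) : AntitoneOn α (Icc 0 tx) :=
  h.strictAntiOn.antitoneOn.mono (Icc_subset_Icc le_rfl h.tx_mem.2)

lemma le_apply (h : IsPlateauBranch α α' a b tx ty) {x : ℝ} (hx : 0 ≤ x) (hxt : x ≤ tx) :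
    ty ≤ α x :=
  h.apply_tx ▸ h.antitoneOn ⟨hx, hxt⟩ ⟨hx.trans hxt, le_rfl⟩ hxt

lemma antitoneOn_add_id (h : IsPlateauBranch α α' a b tx ty) :
    AntitoneOn (fun x => α x + x) (Icc 0 tx) :=
  (h.convexOn.antitoneOn_add_id_of_hasDerivAt h.tx_mem
    (h.deriv_tx ▸ h.hasDerivAt tx h.tx_mem)).mono fun _ hx => ⟨⟨hx.1, hx.2.trans h.tx_mem.2⟩, hx.2⟩

lemma mapsTo (h : IsPlateauBranch α α' a b tx ty) : MapsTo α (Icc 0 a) (Icc 0 b) := fun _ hx =>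
  ⟨h.apply_right ▸ h.strictAntiOn.antitoneOn hx ⟨h.pos.le, le_rfl⟩ hx.2,
    h.apply_zero ▸ h.strictAntiOn.antitoneOn ⟨le_rfl, h.pos.le⟩ hx hx.1⟩

lemma ty_mem (h : IsPlateauBranch α α' a b tx ty) : ty ∈ Icc 0 b :=
  h.apply_tx ▸ h.mapsTo h.tx_mem

lemma symm (h : IsPlateauBranch α α' a b tx ty) (hb : 0 < b) (hβα : ∀ x ∈ Icc 0 a, β (α x) = x)
    (hβd : ∀ y ∈ Icc 0 b, HasDerivAt β (β' y) y) : IsPlateauBranch β β' b a ty tx := by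
  have hcont : ContinuousOn α (Icc 0 a) := fun x hx =>
    (h.hasDerivAt x hx).continuousAt.continuousWithinAt
  have hsurj : Icc 0 b ⊆ α '' Icc 0 a := by
    simpa [h.apply_zero, h.apply_right] using intermediate_value_Icc' h.pos.le hcont
  have hmaps : MapsTo β (Icc 0 b) (Icc 0 a) := fun y hy => by
    obtain ⟨x, hx, rfl⟩ := hsurj hy
    rwa [hβα x hx]
  have hinv : InvOn β α (Icc 0 a) (Icc 0 b) := ⟨hβα, fun y hy => by
    obtain ⟨x, hx, rfl⟩ := hsurj hy
    rw [hβα x hx]⟩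
  have hanti := h.strictAntiOn.strictAntiOn_of_invOn hmaps hinv
  have hchain : β' ty * α' tx = 1 := by
    have hcomp : HasDerivWithinAt (β ∘ α) (β' ty * α' tx) (Icc 0 a) tx :=
      ((h.apply_tx ▸ hβd ty h.ty_mem : HasDerivAt β (β' ty) (α tx)).comp tx
        (h.hasDerivAt tx h.tx_mem)).hasDerivWithinAt
    have hid : HasDerivWithinAt (β ∘ α) 1 (Icc 0 a) tx :=
      (hasDerivWithinAt_id tx _).congr (fun x hx => hβα x hx) (hβα tx h.tx_mem)
    exact (uniqueDiffOn_Icc h.pos tx h.tx_mem).eq_deriv _ hcomp hid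
  refine
    { pos := hb
      hasDerivAt := hβd
      convexOn := h.convexOn.convexOn_of_invOn (convex_Icc 0 b) hanti.antitoneOn h.mapsTo hmaps hinv
      strictAntiOn := hanti
      apply_zero := by simpa [h.apply_right] using hβα a ⟨h.pos.le, le_rfl⟩
      apply_right := by simpa [h.apply_zero] using hβα 0 ⟨le_rfl, h.pos.le⟩
      tx_mem := h.ty_mem
      deriv_tx := by rw [h.deriv_tx] at hchain; linarith
      apply_tx := by rw [← h.apply_tx, hβα tx h.tx_mem] }

end IsPlateauBranch

lemma min_sub_add_min_sub_le {p q y₁ y₂ : ℝ} (hpq : p ≤ q) (hy : y₁ ≤ y₂) :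
    min (y₁ - q) 0 + min (y₂ - p) 0 ≤ min (y₂ - q) 0 + min (y₁ - p) 0 := by
  simp only [min_def]
  split_ifs <;> linarith

noncomputable def plateau (α β : ℝ → ℝ) (a b tx ty x y : ℝ) : ℝ :=
  if tx ≤ x ∧ ty ≤ y then a - tx + b - ty
  else if tx ≤ x then a - tx + b - ty + min (x - β y) 0
  else if ty ≤ y then a - tx + b - ty + min (y - α x) 0
  else a - α x + b - β y

def deficit (α : ℝ → ℝ) (tx ty x y : ℝ) : ℝ :=
  min (y - α (min x tx)) 0 - min (y - ty) 0

section Deficit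

variable {α β : ℝ → ℝ} {tx ty x y : ℝ}

lemma le_apply_min (hα : AntitoneOn α (Icc 0 tx)) (hαt : α tx = ty) (htx : 0 ≤ tx)
    (hx : 0 ≤ x) : ty ≤ α (min x tx) :=
  hαt ▸ hα ⟨le_min hx htx, min_le_right _ _⟩ ⟨htx, le_rfl⟩ (min_le_right _ _)

lemma deficit_nonpos (hα : AntitoneOn α (Icc 0 tx)) (hαt : α tx = ty) (htx : 0 ≤ tx)
    (hx : 0 ≤ x) : deficit α tx ty x y ≤ 0 := by
  have := le_apply_min hα hαt htx hx
  rw [deficit, sub_nonpos]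
  exact min_le_min_right 0 (by linarith)

lemma deficit_eq_zero_of_le (hβt : β ty = tx) (hy : ty ≤ y) : deficit β ty tx y x = 0 := by
  rw [deficit, min_eq_right hy, hβt, sub_self]

lemma deficit_apply_self (hxt : x ≤ tx) (hty : ty ≤ α x) : deficit α tx ty x (α x) = 0 := by
  rw [deficit, min_eq_left hxt, sub_self, min_self, min_eq_right (by linarith), sub_self]

lemma deficit_submodular (hα : AntitoneOn α (Icc 0 tx)) (htx : 0 ≤ tx) {x₁ x₂ y₁ y₂ : ℝ}
    (hx₁ : 0 ≤ x₁) (hx : x₁ ≤ x₂) (hy : y₁ ≤ y₂) :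
    deficit α tx ty x₁ y₁ + deficit α tx ty x₂ y₂ ≤
      deficit α tx ty x₁ y₂ + deficit α tx ty x₂ y₁ := by
  have := min_sub_add_min_sub_le (antitoneOn_comp_min htx hα hx₁ (hx₁.trans hx) hx) hy
  simp only [deficit]
  linarith

/-- For `y ≥ ty` only the deficit of `α` is present; for `y < ty` the kink of `min (x - tx) 0` is
absorbed by `α`, whose slope is at most `-1` on `[0, tx]`. -/
lemma concaveOn_and_monotoneOn_deficit_add_deficit (hconv : ConvexOn ℝ (Icc 0 tx) α)
    (hα : AntitoneOn (fun x => α x + x) (Icc 0 tx)) (hαt : α tx = ty) (hβt : β ty = tx)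
    (htx : 0 ≤ tx) :
    ConcaveOn ℝ (Ici 0) (fun x => deficit α tx ty x y + deficit β ty tx y x) ∧
      MonotoneOn (fun x => deficit α tx ty x y + deficit β ty tx y x) (Ici 0) := by
  have hanti : AntitoneOn α (Icc 0 tx) := fun u hu v hv huv => by
    have := hα hu hv huv
    dsimp only at this
    linarith
  rcases le_or_gt ty y with hy | hy
  · have heq : (fun x => deficit α tx ty x y + deficit β ty tx y x) =
        fun x => min (y - α (min x tx)) 0 - min (y - ty) 0 := by
      funext x
      rw [deficit_eq_zero_of_le hβt hy, add_zero, deficit]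
    rw [heq]
    refine ⟨(((concaveOn_const y (convex_Ici 0)).sub (convexOn_comp_min htx hconv hanti)).inf
      (concaveOn_const 0 (convex_Ici 0))).sub (convexOn_const _ (convex_Ici 0)), ?_⟩
    intro u hu v hv huv
    dsimp only
    gcongr
    exact antitoneOn_comp_min htx hanti hu hv huv
  · have heq : EqOn (fun x => deficit α tx ty x y + deficit β ty tx y x)
        (fun x => ty + tx + min (x - β y) 0 - (α (min x tx) + min x tx)) (Ici 0) := by
      intro x hx
      have := le_apply_min hanti hαt htx hx
      have hmin : min (x - tx) 0 = min x tx - tx := by rw [← min_sub_sub_right, sub_self]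
      simp only [deficit]
      rw [min_eq_left (by linarith : y - α (min x tx) ≤ 0), min_eq_left (by linarith : y - ty ≤ 0),
        min_eq_left hy.le, hmin]
      ring
    have hH := convexOn_comp_min htx (hconv.add (convexOn_id (convex_Icc 0 tx))) hα
    refine ⟨ConcaveOn.congr ?_ heq.symm, MonotoneOn.congr ?_ heq.symm⟩
    · exact ((concaveOn_const _ (convex_Ici 0)).add (((concaveOn_id (convex_Ici 0)).sub
        (convexOn_const _ (convex_Ici 0))).inf (concaveOn_const 0 (convex_Ici 0)))).sub hH
    · intro u hu v hv huv
      have := antitoneOn_comp_min htx hα hu hv huv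
      dsimp only at this ⊢
      have : min (u - β y) 0 ≤ min (v - β y) 0 := by gcongr
      linarith

end Deficit

section Plateau

variable {α α' β β' : ℝ → ℝ} {a b tx ty x y x₀ y₀ : ℝ}

lemma plateau_swap (α β : ℝ → ℝ) (a b tx ty x y : ℝ) :
    plateau α β a b tx ty x y = plateau β α b a ty tx y x := by
  unfold plateau
  split_ifs <;> first | (exfalso; tauto) | ring

lemma plateau_eq_add_deficit (hα : IsPlateauBranch α α' a b tx ty)
    (hβ : IsPlateauBranch β β' b a ty tx) (hx : 0 ≤ x) (hy : 0 ≤ y) :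
    plateau α β a b tx ty x y = a - tx + b - ty + (deficit α tx ty x y + deficit β ty tx y x) := by
  unfold plateau
  split_ifs with h₁ h₂ h₃
  · rw [deficit_eq_zero_of_le hα.apply_tx h₁.1, deficit_eq_zero_of_le hβ.apply_tx h₁.2]
    ring
  · have hy' : y < ty := lt_of_not_ge fun hy' => h₁ ⟨h₂, hy'⟩
    rw [deficit_eq_zero_of_le hα.apply_tx h₂, deficit, min_eq_left hy'.le,
      min_eq_right (sub_nonneg.2 h₂)]
    ring
  · have hx' : x < tx := lt_of_not_ge h₂
    rw [deficit_eq_zero_of_le hβ.apply_tx h₃, deficit, min_eq_left hx'.le,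
      min_eq_right (sub_nonneg.2 h₃)]
    ring
  · have hx' : x < tx := lt_of_not_ge h₂
    have hy' : y < ty := lt_of_not_ge h₃
    have hαx := hα.le_apply hx hx'.le
    have hβy := hβ.le_apply hy hy'.le
    simp only [deficit]
    rw [min_eq_left hx'.le, min_eq_left hy'.le, min_eq_left (by linarith : y - α x ≤ 0),
      min_eq_left (by linarith : y - ty ≤ 0), min_eq_left (by linarith : x - β y ≤ 0),
      min_eq_left (by linarith : x - tx ≤ 0)]
    ring

lemma plateau_zero_zero (hα : IsPlateauBranch α α' a b tx ty)
    (hβ : IsPlateauBranch β β' b a ty tx) : plateau α β a b tx ty 0 0 = 0 := by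
  rw [plateau_eq_add_deficit hα hβ le_rfl le_rfl]
  simp only [deficit, min_eq_left hα.tx_mem.1, min_eq_left hβ.tx_mem.1, hα.apply_zero,
    hβ.apply_zero, zero_sub, min_eq_left (neg_nonpos.2 hα.pos.le),
    min_eq_left (neg_nonpos.2 hβ.pos.le), min_eq_left (neg_nonpos.2 hα.tx_mem.1),
    min_eq_left (neg_nonpos.2 hβ.tx_mem.1)]
  ring

lemma plateau_le (hα : IsPlateauBranch α α' a b tx ty) (hβ : IsPlateauBranch β β' b a ty tx)
    (hx : 0 ≤ x) (hy : 0 ≤ y) : plateau α β a b tx ty x y ≤ a - tx + b - ty := by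
  rw [plateau_eq_add_deficit hα hβ hx hy]
  linarith [deficit_nonpos hα.antitoneOn hα.apply_tx hα.tx_mem.1 hx (y := y),
    deficit_nonpos hβ.antitoneOn hβ.apply_tx hβ.tx_mem.1 hy (y := x)]

lemma concaveOn_and_monotoneOn_plateau (hα : IsPlateauBranch α α' a b tx ty)
    (hβ : IsPlateauBranch β β' b a ty tx) (hy : 0 ≤ y) :
    ConcaveOn ℝ (Ici 0) (fun x => plateau α β a b tx ty x y) ∧
      MonotoneOn (fun x => plateau α β a b tx ty x y) (Ici 0) := by
  have heq : EqOn (fun x => a - tx + b - ty + (deficit α tx ty x y + deficit β ty tx y x))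
      (fun x => plateau α β a b tx ty x y) (Ici 0) := fun x hx =>
    (plateau_eq_add_deficit hα hβ hx hy).symm
  obtain ⟨hconc, hmono⟩ := concaveOn_and_monotoneOn_deficit_add_deficit (y := y)
    (hα.convexOn.subset (Icc_subset_Icc le_rfl hα.tx_mem.2) (convex_Icc 0 tx))
    hα.antitoneOn_add_id hα.apply_tx hβ.apply_tx hα.tx_mem.1
  exact ⟨((concaveOn_const _ (convex_Ici 0)).add hconc).congr heq,
    MonotoneOn.congr (fun _ hu _ hv huv => by linarith [hmono hu hv huv]) heq⟩

lemma plateau_submodular (hα : IsPlateauBranch α α' a b tx ty)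
    (hβ : IsPlateauBranch β β' b a ty tx) {x₁ x₂ y₁ y₂ : ℝ} (hx₁ : 0 ≤ x₁) (hx : x₁ ≤ x₂)
    (hy₁ : 0 ≤ y₁) (hy : y₁ ≤ y₂) :
    plateau α β a b tx ty x₁ y₁ + plateau α β a b tx ty x₂ y₂ ≤
      plateau α β a b tx ty x₁ y₂ + plateau α β a b tx ty x₂ y₁ := by
  have hx₂ := hx₁.trans hx
  have hy₂ := hy₁.trans hy
  rw [plateau_eq_add_deficit hα hβ hx₁ hy₁, plateau_eq_add_deficit hα hβ hx₂ hy₂,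
    plateau_eq_add_deficit hα hβ hx₁ hy₂, plateau_eq_add_deficit hα hβ hx₂ hy₁]
  linarith [deficit_submodular hα.antitoneOn hα.tx_mem.1 hx₁ hx hy (ty := ty),
    deficit_submodular hβ.antitoneOn hβ.tx_mem.1 hy₁ hy hx (ty := tx)]

lemma plateau_eq_of_mem_graph (hα : IsPlateauBranch α α' a b tx ty)
    (hβ : IsPlateauBranch β β' b a ty tx) (hx₀ : 0 ≤ x₀) (hy₀ : 0 ≤ y₀)
    (hcurve : x₀ ≤ tx ∧ y₀ = α x₀ ∨ tx < x₀ ∧ y₀ < ty ∧ β y₀ = x₀) :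
    plateau α β a b tx ty x₀ y₀ = a - tx + b - ty := by
  rw [plateau_eq_add_deficit hα hβ hx₀ hy₀]
  rcases hcurve with ⟨hxt, rfl⟩ | ⟨hxt, hyt, rfl⟩
  · have hty := hα.le_apply hx₀ hxt
    rw [deficit_apply_self hxt hty, deficit_eq_zero_of_le hβ.apply_tx hty]
    ring
  · have htx := hβ.le_apply hy₀ hyt.le
    rw [deficit_apply_self hyt.le htx, deficit_eq_zero_of_le hα.apply_tx htx]
    ring

/-- Left of `tx` this holds because `α` has slope at most `-1` there; right of `tx` the plateau
function is `a - tx + b - ty + min (x - β y) 0`. -/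
lemma eventually_plateau_sub_le (hα : IsPlateauBranch α α' a b tx ty)
    (hβ : IsPlateauBranch β β' b a ty tx) (hx₀ : 0 < x₀) (hy₀ : 0 ≤ y₀)
    (hcurve : x₀ ≤ tx ∧ y₀ = α x₀ ∨ tx < x₀ ∧ y₀ < ty ∧ β y₀ = x₀) :
    ∀ᶠ ε in 𝓝[>] 0, plateau α β a b tx ty (x₀ - ε) y₀ ≤ a - tx + b - ty - ε := by
  rcases hcurve with ⟨hxt, rfl⟩ | ⟨hxt, hyt, hβy⟩
  · filter_upwards [Ioo_mem_nhdsGT hx₀] with ε ⟨hε, hεx⟩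
    have hmem : x₀ - ε ∈ Icc 0 tx := ⟨by linarith, by linarith⟩
    have hslope := hα.antitoneOn_add_id hmem ⟨hx₀.le, hxt⟩ (by linarith)
    have hdefα : deficit α tx ty (x₀ - ε) (α x₀) ≤ -ε := by
      rw [deficit, min_eq_left hmem.2, min_eq_right (sub_nonneg.2 (hα.le_apply hx₀.le hxt)),
        sub_zero]
      exact (min_le_left _ _).trans (by dsimp only at hslope; linarith)
    rw [plateau_eq_add_deficit hα hβ hmem.1 hy₀]
    linarith [deficit_nonpos hβ.antitoneOn hβ.apply_tx hβ.tx_mem.1 hy₀ (y := x₀ - ε)]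
  · filter_upwards [Ioo_mem_nhdsGT (sub_pos.2 hxt)] with ε ⟨hε, hεx⟩
    have hdefβ : deficit β ty tx y₀ (x₀ - ε) = -ε := by
      rw [deficit, min_eq_left hyt.le, hβy, min_eq_left (by linarith),
        min_eq_right (by linarith)]
      ring
    have hmem : 0 ≤ x₀ - ε := by linarith [hα.tx_mem.1]
    rw [plateau_eq_add_deficit hα hβ hmem hy₀, hdefβ]
    linarith [deficit_nonpos hα.antitoneOn hα.apply_tx hα.tx_mem.1 hmem (y := y₀)]

lemma one_le_sub_of_tendsto_plateau (hα : IsPlateauBranch α α' a b tx ty)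
    (hβ : IsPlateauBranch β β' b a ty tx) (hx₀ : 0 < x₀) (hy₀ : 0 ≤ y₀)
    (hcurve : x₀ ≤ tx ∧ y₀ = α x₀ ∨ tx < x₀ ∧ y₀ < ty ∧ β y₀ = x₀) {dm dp : ℝ}
    (hm : Tendsto (fun ε => (plateau α β a b tx ty x₀ y₀ - plateau α β a b tx ty (x₀ - ε) y₀) / ε)
      (𝓝[>] 0) (𝓝 dm))
    (hp : Tendsto (fun ε => (plateau α β a b tx ty (x₀ + ε) y₀ - plateau α β a b tx ty x₀ y₀) / ε)
      (𝓝[>] 0) (𝓝 dp)) :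
    1 ≤ dm - dp := by
  have hval := plateau_eq_of_mem_graph hα hβ hx₀.le hy₀ hcurve
  refine one_le_sub_of_eventually_le (G := fun x => plateau α β a b tx ty x y₀) hm hp ?_ ?_
  · rw [hval]
    exact eventually_plateau_sub_le hα hβ hx₀ hy₀ hcurve
  · filter_upwards [self_mem_nhdsWithin] with ε (hε : 0 < ε)
    rw [hval]
    exact plateau_le hα hβ (by linarith) hy₀

lemma tendsto_plateau_slope_zero (hα : IsPlateauBranch α α' a b tx ty)
    (hβ : IsPlateauBranch β β' b a ty tx) :
    Tendsto (fun ε => (plateau α β a b tx ty ε 0 - plateau α β a b tx ty 0 0) / ε) (𝓝[>] 0)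
      (𝓝 (-α' 0)) := by
  have hform : ∀ ε, 0 ≤ ε → ε ≤ a →
      plateau α β a b tx ty ε 0 = b + ε - (α (min ε tx) + min ε tx) := by
    intro ε hε hεa
    have hA := (le_apply_min hα.antitoneOn hα.apply_tx hα.tx_mem.1 hε).trans' hβ.tx_mem.1
    have hmin : min (ε - tx) 0 = min ε tx - tx := by rw [← min_sub_sub_right, sub_self]
    rw [plateau_eq_add_deficit hα hβ hε le_rfl]
    simp only [deficit, min_eq_left hβ.tx_mem.1, hβ.apply_zero, zero_sub,
      min_eq_left (by linarith : -α (min ε tx) ≤ 0), min_eq_left (neg_nonpos.2 hβ.tx_mem.1),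
      min_eq_left (sub_nonpos.2 hεa), hmin]
    ring
  rw [plateau_zero_zero hα hβ]
  rcases hα.tx_mem.1.eq_or_lt with htx | htx
  · -- `tx = 0`: the plateau function is `x ↦ x` along the first axis, and `α' 0 = α' tx = -1`
    rw [show α' 0 = -1 by rw [htx]; exact hα.deriv_tx, neg_neg]
    refine tendsto_const_nhds.congr' ?_
    filter_upwards [Ioo_mem_nhdsGT hα.pos] with ε ⟨hε, hεa⟩
    rw [hform ε hε.le hεa.le, ← htx, min_eq_right hε.le, hα.apply_zero]
    field_simp
    ring
  · refine (hα.hasDerivAt 0 ⟨le_rfl, hα.pos.le⟩).tendsto_slope_zero_right.neg.congr' ?_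
    filter_upwards [Ioo_mem_nhdsGT (lt_min htx hα.pos)] with ε ⟨hε, hεm⟩
    rw [hform ε hε.le (hεm.le.trans (min_le_right _ _)),
      min_eq_left (hεm.le.trans (min_le_left _ _)), ← hα.apply_zero, zero_add, smul_eq_mul]
    field_simp
    ring

theorem isEL_plateau (hα : IsPlateauBranch α α' a b tx ty) (hβ : IsPlateauBranch β β' b a ty tx) :
    IsEL 2 (fun p => plateau α β a b tx ty (p 0) (p 1)) :=
  isEL_two_of_sections (plateau_zero_zero hα hβ) (fun _ _ _ _ => plateau_submodular hα hβ)
    (fun _ hy => concaveOn_and_monotoneOn_plateau hα hβ hy)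
    (fun _ hx => by simpa only [plateau_swap β α] using concaveOn_and_monotoneOn_plateau hβ hα hx)

theorem sFeasible_plateau (hα : IsPlateauBranch α α' a b tx ty)
    (hβ : IsPlateauBranch β β' b a ty tx) (hβα : ∀ x ∈ Icc 0 a, β (α x) = x) :
    SFeasible 2 (fun p => plateau α β a b tx ty (p 0) (p 1))
      {p | p 0 ∈ Icc 0 a ∧ p 1 = α (p 0)} := by
  rintro p ⟨hp0, hp1⟩ hpos i dm dp hdm hdp
  fin_cases i
  · refine one_le_sub_of_tendsto_plateau hα hβ (hpos 0) (hpos 1).le ?_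
      (by simpa [HasLeftPD] using hdm) (by simpa [HasRightPD] using hdp)
    rcases le_or_gt (p 0) tx with h | h
    · exact Or.inl ⟨h, hp1⟩
    · exact Or.inr ⟨h, hp1 ▸ hα.apply_tx ▸ hα.strictAntiOn hα.tx_mem hp0 h, by rw [hp1, hβα _ hp0]⟩
  · refine one_le_sub_of_tendsto_plateau hβ hα (hpos 1) (hpos 0).le ?_
      (by simpa [HasLeftPD, plateau_swap α β] using hdm)
      (by simpa [HasRightPD, plateau_swap α β] using hdp)
    rcases le_or_gt (p 1) ty with h | h
    · exact Or.inl ⟨h, by rw [hp1, hβα _ hp0]⟩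
    · refine Or.inr ⟨h, lt_of_not_ge fun h' => ?_, hp1.symm⟩
      have := hα.strictAntiOn.antitoneOn hα.tx_mem hp0 h'
      rw [hα.apply_tx, ← hp1] at this
      linarith

theorem hasRightPD_plateau_zero (hα : IsPlateauBranch α α' a b tx ty)
    (hβ : IsPlateauBranch β β' b a ty tx) :
    HasRightPD 2 (fun p => plateau α β a b tx ty (p 0) (p 1)) 0 0 (-α' 0) := by
  simpa [HasRightPD] using tendsto_plateau_slope_zero hα hβ

theorem hasRightPD_plateau_one (hα : IsPlateauBranch α α' a b tx ty)
    (hβ : IsPlateauBranch β β' b a ty tx) :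
    HasRightPD 2 (fun p => plateau α β a b tx ty (p 0) (p 1)) 1 0 (-β' 0) := by
  simpa [HasRightPD, plateau_swap α β] using tendsto_plateau_slope_zero hβ hα

end Plateau

theorem stmt_15_general (a b : ℝ) (ha : 0 < a) (hb : 0 < b)
    (α β α' β' : ℝ → ℝ)
    (hαd : ∀ x ∈ Set.Icc 0 a, HasDerivAt α (α' x) x)
    (hanti : StrictAntiOn α (Set.Icc 0 a))
    (hconv : StrictConvexOn ℝ (Set.Icc 0 a) α)
    (hα0 : α 0 = b) (hαa : α a = 0)
    (hβα : ∀ x ∈ Set.Icc 0 a, β (α x) = x)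
    (hβd : ∀ y ∈ Set.Icc 0 b, HasDerivAt β (β' y) y)
    (tx ty : ℝ) (htx : tx ∈ Set.Icc 0 a) (hT : α' tx = -1) (hty : ty = α tx)
    (C : ℝ) (hC : C = a - tx + b - ty)
    (S : Set (Fin 2 → ℝ))
    (hS : S = {p : Fin 2 → ℝ | p 0 ∈ Set.Icc 0 a ∧ p 1 = α (p 0)})
    (f : (Fin 2 → ℝ) → ℝ)
    (hfdef : f = fun p =>
      if tx ≤ p 0 ∧ ty ≤ p 1 then C
      else if tx ≤ p 0 then C + min (p 0 - β (p 1)) 0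
      else if ty ≤ p 1 then C + min (p 1 - α (p 0)) 0
      else a - α (p 0) + b - β (p 1)) :
    IsEL 2 f ∧ SFeasible 2 f S ∧
      ∃ d0 d1 : ℝ, HasRightPD 2 f 0 0 d0 ∧ HasRightPD 2 f 1 0 d1 ∧
        max d0 d1 = max (-(α' 0)) (-(β' 0)) := by
  have hα : IsPlateauBranch α α' a b tx ty :=
    ⟨ha, hαd, hconv.convexOn, hanti, hα0, hαa, htx, hT, hty.symm⟩
  have hβ := hα.symm hb hβα hβd
  subst hC hfdef hS
  exact ⟨isEL_plateau hα hβ, sFeasible_plateau hα hβ hβα, -α' 0, -β' 0,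
    hasRightPD_plateau_zero hα hβ, hasRightPD_plateau_one hα hβ, rfl⟩

/-- the plateau construction for a strictly convex curve `S`
is an optimal S-feasible EL function of cost `max(−α'(0), −β'(0))`. -/
theorem stmt_15 (a b : ℝ) (ha : 0 < a) (hb : 0 < b)
    (α β α' β' : ℝ → ℝ)
    (hαd : ∀ x ∈ Set.Icc 0 a, HasDerivAt α (α' x) x)
    (hα'c : ContinuousOn α' (Set.Icc 0 a))
    (hanti : StrictAntiOn α (Set.Icc 0 a))
    (hconv : StrictConvexOn ℝ (Set.Icc 0 a) α)
    (hα0 : α 0 = b) (hαa : α a = 0)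
    (hs0 : α' 0 ≤ -1) (hsa : -1 ≤ α' a) (hsa' : α' a < 0)
    (hβα : ∀ x ∈ Set.Icc 0 a, β (α x) = x)
    (hαβ : ∀ y ∈ Set.Icc 0 b, α (β y) = y)
    (hβd : ∀ y ∈ Set.Icc 0 b, HasDerivAt β (β' y) y)
    (tx ty : ℝ) (htx : tx ∈ Set.Icc 0 a) (hT : α' tx = -1) (hty : ty = α tx)
    (C : ℝ) (hC : C = a - tx + b - ty)
    (S : Set (Fin 2 → ℝ))
    (hS : S = {p : Fin 2 → ℝ | p 0 ∈ Set.Icc 0 a ∧ p 1 = α (p 0)})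
    (f : (Fin 2 → ℝ) → ℝ)
    (hfdef : f = fun p =>
      if tx ≤ p 0 ∧ ty ≤ p 1 then C
      else if tx ≤ p 0 then C + min (p 0 - β (p 1)) 0
      else if ty ≤ p 1 then C + min (p 1 - α (p 0)) 0
      else a - α (p 0) + b - β (p 1)) :
    IsEL 2 f ∧ SFeasible 2 f S ∧
      ∃ d0 d1 : ℝ, HasRightPD 2 f 0 0 d0 ∧ HasRightPD 2 f 1 0 d1 ∧
        max d0 d1 = max (-(α' 0)) (-(β' 0)) :=
  stmt_15_general a b ha hb α β α' β' hαd hanti hconv hα0 hαa hβα hβd tx ty htx hT hty C hC S hS f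
    hfdef
end

section
/- Suppose for an s-surface S contained in the box B = {x ∈ O^n : x ≤ a} there exists a sequence of S-feasible EL functions f_k with cost(f_k) < M for all k and cost(f_k) → c, the infimum of costs of S-feasible functions. Then there exists an S-feasible EL function g with cost(g) ≤ c (so the infimum is attained). -/
/-!
Restricted to a coordinate line, an EL function is monotone with diminishing increments, hence
concave. So its one-sided partial derivatives exist and are bounded by difference quotients,
and S-feasibility turns into inequalities between difference quotients, which survive pointwise
limits. Since the costs converge to `c`, eventually every `f_k` is bounded on the orthant by
`(c + 1) * ∑ i, x i`; along an ultrafilter finer than `atTop` the `f_k` then converge at every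
point at once. The limit is EL and S-feasible, and its difference quotients at `0` are at most
`c`.
-/

open Filter Topology Set

theorem Antitone.mul_sum_range_add_le {g : ℕ → ℝ} (hg : Antitone g) (p q : ℕ) :
    q * ∑ m ∈ Finset.range p, g (q + m) ≤ p * ∑ m ∈ Finset.range q, g m := by
  have hlate : ∑ m ∈ Finset.range p, g (q + m) ≤ p * g q := by
    simpa using Finset.sum_le_card_nsmul (Finset.range p) _ _ fun m _ =>
      hg (Nat.le_add_right q m)
  have hearly : q * g q ≤ ∑ m ∈ Finset.range q, g m := by
    simpa using Finset.card_nsmul_le_sum (Finset.range q) _ _ fun m hm =>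
      hg (Finset.mem_range.1 hm).le
  calc q * ∑ m ∈ Finset.range p, g (q + m) ≤ q * (p * g q) := by gcongr
    _ = p * (q * g q) := by ring
    _ ≤ p * ∑ m ∈ Finset.range q, g m := by gcongr

section DiminishingReturns

variable {φ : ℝ → ℝ}

theorem mul_sub_le_mul_sub_of_diminishing
    (hDR : ∀ s t ε, 0 ≤ s → s ≤ t → 0 < ε → φ (t + ε) - φ t ≤ φ (s + ε) - φ s)
    {s δ : ℝ} (hs : 0 ≤ s) (hδ : 0 < δ) (p q : ℕ) :
    q * (φ (s + (q + p) * δ) - φ (s + q * δ)) ≤ p * (φ (s + q * δ) - φ s) := by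
  set G : ℕ → ℝ := fun m => φ (s + m * δ)
  have hstep : ∀ m : ℕ, G (m + 1) = φ (s + m * δ + δ) := fun m => by
    simp only [G]; push_cast; ring_nf
  have hanti : Antitone fun m => G (m + 1) - G m := fun m m' hmm' => by
    simp only [hstep]
    exact hDR _ _ _ (by positivity) (by gcongr) hδ
  have hlate : ∑ m ∈ Finset.range p, (G (q + m + 1) - G (q + m)) = G (q + p) - G q :=
    Finset.sum_range_sub (fun m => G (q + m)) p
  have hearly : ∑ m ∈ Finset.range q, (G (m + 1) - G m) = G q - G 0 := Finset.sum_range_sub G q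
  have key := hanti.mul_sum_range_add_le p q
  rw [hlate, hearly] at key
  simpa [G] using key

theorem concaveOn_Ici_of_diminishing (hmono : MonotoneOn φ (Ici 0))
    (hDR : ∀ s t ε, 0 ≤ s → s ≤ t → 0 < ε →
      φ (t + ε) - φ t ≤ φ (s + ε) - φ s) :
    ConcaveOn ℝ (Ici 0) φ := by
  refine concaveOn_of_slope_anti_adjacent (convex_Ici 0) fun {s t u} hs hu hst htu => ?_
  have hs : (0 : ℝ) ≤ s := hs
  have hts : 0 < t - s := sub_pos.2 hst
  have hgain : 0 ≤ φ t - φ s := sub_nonneg.2 (hmono hs (hs.trans hst.le) hst.le)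
  -- split `[s, t]` into `q` steps of length `δ` and cover `[t, u]` by `p` more such steps
  have hq : ∀ q : ℕ, 0 < q →
      (t - s) * (φ u - φ t) ≤ (u - t + (t - s) / q) * (φ t - φ s) := by
    intro q hq
    set δ := (t - s) / q with hδ
    have hδpos : 0 < δ := div_pos hts (Nat.cast_pos.2 hq)
    have hqδ : q * δ = t - s := by rw [hδ]; field_simp
    set p := ⌈(u - t) / δ⌉₊
    have hp : (u - t) / δ ≤ p := Nat.le_ceil _
    have hp' : (p : ℝ) < (u - t) / δ + 1 := Nat.ceil_lt_add_one (div_pos (by linarith) hδpos).le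
    rw [div_le_iff₀ hδpos] at hp
    rw [← sub_lt_iff_lt_add, lt_div_iff₀ hδpos] at hp'
    have hgrid := mul_sub_le_mul_sub_of_diminishing hDR hs hδpos p q
    have hst' : s + q * δ = t := by rw [hqδ]; ring
    rw [hst'] at hgrid
    calc (t - s) * (φ u - φ t) ≤ (t - s) * (φ (s + (q + p) * δ) - φ t) := by
          gcongr
          exact hmono hu (show 0 ≤ s + (q + p) * δ by positivity) (by linarith)
      _ = δ * (q * (φ (s + (q + p) * δ) - φ t)) := by rw [← hqδ]; ring
      _ ≤ δ * (p * (φ t - φ s)) := by gcongr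
      _ ≤ (u - t + δ) * (φ t - φ s) := by rw [← mul_assoc, mul_comm δ]; gcongr; linarith
  have hlim : Tendsto (fun q : ℕ => (u - t + (t - s) / q) * (φ t - φ s)) atTop
      (𝓝 ((u - t) * (φ t - φ s))) := by
    simpa using ((tendsto_const_div_atTop_nhds_zero_nat (t - s)).const_add (u - t)).mul_const
      (φ t - φ s)
  have := ge_of_tendsto hlim ((eventually_gt_atTop 0).mono hq)
  rw [div_le_div_iff₀ (sub_pos.2 htu) hts]
  linarith

end DiminishingReturns

section Coordinates

variable {n : ℕ} {x : Fin n → ℝ} (i : Fin n)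

theorem add_smul_single_eq_update (a : ℝ) :
    x + a • (Pi.single i 1 : Fin n → ℝ) = Function.update x i (x i + a) := by
  ext j
  by_cases h : j = i <;> simp [h]

theorem sub_smul_single_eq_update (a : ℝ) :
    x - a • (Pi.single i 1 : Fin n → ℝ) = Function.update x i (x i - a) := by
  ext j
  by_cases h : j = i <;> simp [h]

theorem update_nonneg (hx : 0 ≤ x) {t : ℝ} (ht : 0 ≤ t) : 0 ≤ Function.update x i t :=
  le_update_iff.2 ⟨ht, fun j _ => hx j⟩

theorem add_smul_single_nonneg (hx : 0 ≤ x) {a : ℝ} (ha : 0 ≤ a) :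
    0 ≤ x + a • (Pi.single i 1 : Fin n → ℝ) :=
  add_nonneg hx (smul_nonneg ha (Pi.single_nonneg.2 zero_le_one))

end Coordinates

section PartialDerivatives

variable {n : ℕ} {f : (Fin n → ℝ) → ℝ} {i : Fin n} {x : Fin n → ℝ} {d : ℝ}

theorem hasRightPD_iff :
    HasRightPD n f i x d ↔ HasDerivWithinAt (f ∘ Function.update x i) d (Ioi (x i)) (x i) := by
  rw [hasDerivWithinAt_iff_tendsto_slope' self_notMem_Ioi, ← add_zero (x i),
    ← map_add_left_nhdsGT, tendsto_map'_iff, add_zero]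
  refine Iff.of_eq (congrArg (Tendsto · _ _) (funext fun ε => ?_))
  simp [slope_def_field, add_smul_single_eq_update]

theorem hasLeftPD_iff :
    HasLeftPD n f i x d ↔ HasDerivWithinAt (f ∘ Function.update x i) d (Iio (x i)) (x i) := by
  rw [hasDerivWithinAt_iff_tendsto_slope' self_notMem_Iio, ← sub_zero (x i),
    ← map_subLeft_nhdsGT, tendsto_map'_iff, sub_zero]
  refine Iff.of_eq (congrArg (Tendsto · _ _) (funext fun ε => ?_))
  simp only [Function.comp_apply, slope_def_field, sub_smul_single_eq_update,
    Function.update_eq_self]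
  rw [sub_sub_cancel_left, div_neg, ← neg_div, neg_sub]

end PartialDerivatives

section OneSidedDerivatives

variable {φ : ℝ → ℝ}

theorem ConcaveOn.exists_hasDerivWithinAt_Ioi_le {a B : ℝ} (hφ : ConcaveOn ℝ (Ici a) φ)
    (hB : ∀ t, a < t → slope φ a t ≤ B) : ∃ e ≤ B, HasDerivWithinAt φ e (Ioi a) a := by
  have hanti : AntitoneOn (slope φ a) (Ioi a) :=
    (hφ.slope_anti self_mem_Ici).mono fun t ht => ⟨mem_Ici.2 (le_of_lt ht), ne_of_gt ht⟩
  have hB' : ∀ v ∈ slope φ a '' Ioi a, v ≤ B := by rintro _ ⟨t, ht, rfl⟩; exact hB t ht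
  exact ⟨sSup (slope φ a '' Ioi a), csSup_le (nonempty_Ioi.image _) hB',
    (hasDerivWithinAt_iff_tendsto_slope' self_notMem_Ioi).2 (hanti.tendsto_nhdsGT ⟨B, hB'⟩)⟩

theorem ConcaveOn.add_slope_le_slope {s : Set ℝ} {a y z c : ℝ} (hφ : ConcaveOn ℝ s φ)
    (ha : a ∈ interior s) (hy : y ∈ s) (hz : z ∈ s) (hya : y < a) (haz : a < z)
    (hjump : ∀ dm dp, HasDerivWithinAt φ dm (Iio a) a → HasDerivWithinAt φ dp (Ioi a) a →
      c ≤ dm - dp) :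
    c + slope φ a z ≤ slope φ y a := by
  have hleft : DifferentiableWithinAt ℝ φ (Iio a) a := by
    simpa using (hφ.neg.differentiableWithinAt_Iio_of_mem_interior ha).neg
  have hright : DifferentiableWithinAt ℝ φ (Ioi a) a := by
    simpa using (hφ.neg.differentiableWithinAt_Ioi_of_mem_interior ha).neg
  have := hjump _ _ hleft.hasDerivWithinAt hright.hasDerivWithinAt
  have := hφ.leftDeriv_le_slope hy (interior_subset ha) hya hleft
  have := hφ.slope_le_rightDeriv (interior_subset ha) hz haz hright
  linarith

theorem le_sub_of_add_slope_le_slope {a b c dm dp : ℝ} (hba : b < a)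
    (h : ∀ y z, b < y → y < a → a < z → c + slope φ a z ≤ slope φ y a)
    (hdm : HasDerivWithinAt φ dm (Iio a) a) (hdp : HasDerivWithinAt φ dp (Ioi a) a) :
    c ≤ dm - dp := by
  rw [hasDerivWithinAt_iff_tendsto_slope' self_notMem_Iio] at hdm
  rw [hasDerivWithinAt_iff_tendsto_slope' self_notMem_Ioi] at hdp
  have hy : ∀ y, b < y → y < a → c + dp ≤ slope φ a y := fun y hby hya => by
    rw [slope_comm]
    exact le_of_tendsto (hdp.const_add c) (eventually_nhdsWithin_of_forall (h y · hby hya))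
  have := ge_of_tendsto hdm (mem_of_superset (Ioo_mem_nhdsLT hba) fun y hy' => hy y hy'.1 hy'.2)
  linarith

end OneSidedDerivatives

namespace IsEL

variable {n : ℕ} {f : (Fin n → ℝ) → ℝ}

theorem nonneg (hf : IsEL n f) {x : Fin n → ℝ} (hx : 0 ≤ x) : 0 ≤ f x :=
  hf.1 ▸ hf.2.2.1 0 x le_rfl hx

theorem concaveOn_comp_update (hf : IsEL n f) {x : Fin n → ℝ} (hx : 0 ≤ x) (i : Fin n) :
    ConcaveOn ℝ (Ici 0) (f ∘ Function.update x i) := by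
  obtain ⟨-, -, hmono, hDR⟩ := hf
  have hline : ∀ s a : ℝ, Function.update x i s + a • (Pi.single i 1 : Fin n → ℝ) =
      Function.update x i (s + a) := fun s a => by simp [add_smul_single_eq_update]
  refine concaveOn_Ici_of_diminishing (fun s hs t _ hst => hmono _ _ (update_nonneg i hx hs)
    (update_le_update_iff.2 ⟨hst, fun _ _ => le_rfl⟩)) fun s t ε hs hst hε => ?_
  rcases hst.eq_or_lt with rfl | hst
  · exact le_rfl
  have := hDR (Function.update x i s) i (t - s) ε (update_nonneg i hx hs) (sub_pos.2 hst) hε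
  simpa [hline] using this

theorem slope_comp_update_zero (hf : IsEL n f) (i : Fin n) (t : ℝ) :
    slope (f ∘ Function.update (0 : Fin n → ℝ) i) 0 t = f (Pi.single i t) / t := by
  simp [slope_def_field, hf.1, Pi.single]

theorem apply_single_le (hf : IsEL n f) {i : Fin n} {d t : ℝ} (hd : HasRightPD n f i 0 d)
    (ht : 0 ≤ t) : f (Pi.single i t) ≤ d * t := by
  rcases ht.eq_or_lt with rfl | ht
  · simp [hf.1]
  have := (hf.concaveOn_comp_update le_rfl i).slope_le_of_hasDerivWithinAt_Ioi self_mem_Ici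
    ht.le ht (hasRightPD_iff.1 hd)
  rwa [hf.slope_comp_update_zero, div_le_iff₀ ht] at this

theorem apply_le_sum_single (hf : IsEL n f) {x : Fin n → ℝ} (hx : 0 ≤ x) :
    f x ≤ ∑ i, f (Pi.single i (x i)) := by
  classical
  obtain ⟨hzero, hsub, -, -⟩ := hf
  have hx' : ∀ j, 0 ≤ x j := hx
  suffices h : ∀ s : Finset (Fin n), f (s.piecewise x 0) ≤ ∑ i ∈ s, f (Pi.single i (x i)) by
    simpa using h Finset.univ
  intro s
  induction s using Finset.induction_on with
  | empty => simp [hzero]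
  | insert a s ha ih =>
    have hpw : 0 ≤ s.piecewise x 0 := fun j => by by_cases hj : j ∈ s <;> simp [hj, hx']
    have hinf : Pi.single a (x a) ⊓ s.piecewise x 0 = 0 := by
      ext j
      rcases eq_or_ne j a with rfl | hj
      · simp [ha, hx']
      · by_cases hjs : j ∈ s <;> simp [hj, hjs, hx']
    have hsup : Pi.single a (x a) ⊔ s.piecewise x 0 = (insert a s).piecewise x 0 := by
      ext j
      rcases eq_or_ne j a with rfl | hj
      · simp [ha, hx']
      · by_cases hjs : j ∈ s <;> simp [hj, hjs, hx']
    have := hsub (Pi.single a (x a)) _ (Pi.single_nonneg.2 (hx a)) hpw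
    rw [hinf, hsup, hzero, zero_add] at this
    rw [Finset.sum_insert ha]
    linarith

theorem apply_le_mul_sum (hf : IsEL n f) {d : Fin n → ℝ} {B : ℝ}
    (hd : ∀ i, HasRightPD n f i 0 (d i)) (hdB : ∀ i, d i ≤ B) {x : Fin n → ℝ}
    (hx : 0 ≤ x) :
    f x ≤ B * ∑ i, x i := by
  rw [Finset.mul_sum]
  calc f x ≤ ∑ i, f (Pi.single i (x i)) := hf.apply_le_sum_single hx
    _ ≤ ∑ i, d i * x i := Finset.sum_le_sum fun i _ => hf.apply_single_le (hd i) (hx i)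
    _ ≤ ∑ i, B * x i := Finset.sum_le_sum fun i _ => mul_le_mul_of_nonneg_right (hdB i) (hx i)

theorem exists_hasRightPD_zero_le (hf : IsEL n f) (i : Fin n) {B : ℝ}
    (hB : ∀ t, 0 < t → f (Pi.single i t) ≤ B * t) : ∃ e ≤ B, HasRightPD n f i 0 e := by
  simp_rw [hasRightPD_iff]
  refine (hf.concaveOn_comp_update le_rfl i).exists_hasDerivWithinAt_Ioi_le fun t ht => ?_
  rw [hf.slope_comp_update_zero, div_le_iff₀ ht]
  exact hB t ht

theorem of_tendsto {ι : Type*} {l : Filter ι} [l.NeBot] {F : ι → (Fin n → ℝ) → ℝ}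
    (hF : ∀ k, IsEL n (F k)) (hg : ∀ x, 0 ≤ x → Tendsto (fun k => F k x) l (𝓝 (f x))) :
    IsEL n f := by
  refine ⟨?_, fun x y hx hy => ?_, fun x y hx hxy => ?_, fun x i lam eps hx hlam heps => ?_⟩
  · exact tendsto_nhds_unique (hg 0 le_rfl) (by simp [fun k => (hF k).1])
  · exact le_of_tendsto_of_tendsto' ((hg _ (le_inf hx hy)).add (hg _ (hx.trans le_sup_left)))
      ((hg x hx).add (hg y hy)) fun k => (hF k).2.1 x y hx hy
  · exact le_of_tendsto_of_tendsto' (hg x hx) (hg y (hx.trans hxy)) fun k =>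
      (hF k).2.2.1 x y hx hxy
  · have h1 := add_smul_single_nonneg i hx hlam.le
    exact le_of_tendsto_of_tendsto'
      ((hg _ (add_smul_single_nonneg i h1 heps.le)).sub (hg _ h1))
      ((hg _ (add_smul_single_nonneg i hx heps.le)).sub (hg x hx))
      fun k => (hF k).2.2.2 x i lam eps hx hlam heps

end IsEL

theorem SFeasible.of_tendsto {n : ℕ} {S : Set (Fin n → ℝ)} {ι : Type*} {l : Filter ι}
    [l.NeBot] {F : ι → (Fin n → ℝ) → ℝ} {g : (Fin n → ℝ) → ℝ}
    (hF : ∀ k, IsEL n (F k)) (hFS : ∀ k, SFeasible n (F k) S)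
    (hg : ∀ x, 0 ≤ x → Tendsto (fun k => F k x) l (𝓝 (g x))) : SFeasible n g S := by
  intro x hxS hxpos i dm dp hdm hdp
  have hx : 0 ≤ x := fun j => (hxpos j).le
  have hslope : ∀ p q : ℝ, 0 ≤ p → 0 ≤ q →
      Tendsto (fun k => slope (F k ∘ Function.update x i) p q) l
        (𝓝 (slope (g ∘ Function.update x i) p q)) := fun p q hp hq => by
    simp only [slope_def_field, Function.comp_apply]
    exact ((hg _ (update_nonneg i hx hq)).sub (hg _ (update_nonneg i hx hp))).div_const _
  refine le_sub_of_add_slope_le_slope (hxpos i) (fun y z hy hya haz => ?_)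
    (hasLeftPD_iff.1 hdm) (hasRightPD_iff.1 hdp)
  have hxi : x i ∈ interior (Ici (0 : ℝ)) := by rw [interior_Ici]; exact hxpos i
  have hz : 0 ≤ z := ((hxpos i).trans haz).le
  refine le_of_tendsto_of_tendsto' ((hslope _ _ (hxpos i).le hz).const_add 1)
    (hslope _ _ hy.le (hxpos i).le) fun k => ?_
  exact ((hF k).concaveOn_comp_update hx i).add_slope_le_slope hxi hy.le hz hya haz
    fun dm dp hdm hdp => hFS k x hxS hxpos i dm dp (hasLeftPD_iff.2 hdm) (hasRightPD_iff.2 hdp)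

theorem stmt_18_general {n : ℕ} [NeZero n] (S : Set (Fin n → ℝ))
    (F : ℕ → (Fin n → ℝ) → ℝ) (hF : ∀ k, IsEL n (F k))
    (hFfeas : ∀ k, SFeasible n (F k) S)
    (d : ℕ → Fin n → ℝ) (hd : ∀ k i, HasRightPD n (F k) i 0 (d k i))
    (c : ℝ)
    (hcost : Filter.Tendsto
      (fun k => Finset.univ.sup' Finset.univ_nonempty (d k)) Filter.atTop (nhds c)) :
    ∃ (g : (Fin n → ℝ) → ℝ) (e : Fin n → ℝ), IsEL n g ∧ SFeasible n g S ∧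
      (∀ i, HasRightPD n g i 0 (e i)) ∧
      Finset.univ.sup' Finset.univ_nonempty e ≤ c := by
  let U : Ultrafilter ℕ := .of atTop
  have hU : (U : Filter ℕ) ≤ atTop := Ultrafilter.of_le atTop
  have hdk : ∀ k i, d k i ≤ Finset.univ.sup' Finset.univ_nonempty (d k) := fun k i =>
    Finset.le_sup' (d k) (Finset.mem_univ i)
  have hbdd : ∀ x, 0 ≤ x → ∀ᶠ k in U, F k x ∈ Icc 0 ((c + 1) * ∑ i, x i) :=
    fun x hx => hU <| (hcost.eventually (eventually_le_nhds (lt_add_one c))).mono fun k hk =>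
      ⟨(hF k).nonneg hx, (hF k).apply_le_mul_sum (hd k) (fun i => (hdk k i).trans hk) hx⟩
  let g : (Fin n → ℝ) → ℝ := fun x => limUnder U fun k => F k x
  have hg : ∀ x, 0 ≤ x → Tendsto (fun k => F k x) U (𝓝 (g x)) := fun x hx =>
    tendsto_nhds_limUnder <|
      let ⟨l, _, hl⟩ := isCompact_Icc.ultrafilter_le_nhds (U.map fun k => F k x)
        (le_principal_iff.2 (hbdd x hx))
      ⟨l, hl⟩
  have hgEL : IsEL n g := IsEL.of_tendsto hF hg
  have hgc : ∀ i t, 0 < t → g (Pi.single i t) ≤ c * t := fun i t ht =>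
    le_of_tendsto_of_tendsto' (hg _ (Pi.single_nonneg.2 ht.le)) ((hcost.mono_left hU).mul_const t)
      fun k => ((hF k).apply_single_le (hd k i) ht.le).trans (by gcongr; exact hdk k i)
  choose e he hge using fun i => hgEL.exists_hasRightPD_zero_le i (hgc i)
  exact ⟨g, e, hgEL, SFeasible.of_tendsto hF hFfeas hg, hge, Finset.sup'_le _ _ fun i _ => he i⟩

/-- if the infimum `c` of costs of S-feasible EL functions is
approached by a sequence of S-feasible EL functions of cost `< M`, then it is
attained: there is an S-feasible EL function of cost at most `c`. -/
theorem stmt_18 {n : ℕ} [NeZero n] (S : Set (Fin n → ℝ))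
    (aa : Fin n → ℝ) (haa : 0 ≤ aa) (hSbox : ∀ x ∈ S, 0 ≤ x ∧ x ≤ aa)
    (F : ℕ → (Fin n → ℝ) → ℝ) (hF : ∀ k, IsEL n (F k))
    (hFfeas : ∀ k, SFeasible n (F k) S)
    (d : ℕ → Fin n → ℝ) (hd : ∀ k i, HasRightPD n (F k) i 0 (d k i))
    (M c : ℝ)
    (hbound : ∀ k, Finset.univ.sup' Finset.univ_nonempty (d k) < M)
    (hcost : Filter.Tendsto
      (fun k => Finset.univ.sup' Finset.univ_nonempty (d k)) Filter.atTop (nhds c))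
    (hinf : ∀ (g : (Fin n → ℝ) → ℝ) (e : Fin n → ℝ), IsEL n g → SFeasible n g S →
      (∀ i, HasRightPD n g i 0 (e i)) →
      c ≤ Finset.univ.sup' Finset.univ_nonempty e) :
    ∃ (g : (Fin n → ℝ) → ℝ) (e : Fin n → ℝ), IsEL n g ∧ SFeasible n g S ∧
      (∀ i, HasRightPD n g i 0 (e i)) ∧
      Finset.univ.sup' Finset.univ_nonempty e ≤ c :=
  stmt_18_general S F hF hFfeas d hd c hcost
end
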